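/- arXiv:1402.0441 — 2 statements merged into one kernel-verified Lean document; each statement's English description precedes it below -/
import Mathlib

section
/- Let m : ℕ → ℕ → [0,∞) be a family of mass functions such that (i) {k ∈ ℕ : m(k)(n) ≠ 0} is finite for every n ∈ ℕ, and (ii) each induced measure is bounded: ∑_{n∈ℕ} m(k)(n) < ∞ for every k. Define φ(A) = sup_{k∈ℕ} ∑_{n∈A} m(k)(n) for A ⊆ ℕ. Then Exh(φ) is a generalized density ideal: there exist a sequence (φ_j)_{j∈ℕ} of submeasures on ℕ and pairwise disjoint finite sets S_j ⊆ ℕ with φ_j(A) = φ_j(A ∩ S_j) for all A, such that for every A ⊆ ℕ: A ∈ Exh(φ) iff φ_j(A) → 0 as j → ∞. -/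
/-!
Cut `ℕ` into consecutive blocks `[n j, n (j + 1))`, growing so fast that every measure `m k`
charging a point below `n j` has tail mass at most `1 / j` beyond `n (j + 1)`, and let `φ_j` be `φ`
restricted to the `j`-th block. Since each point is charged by finitely many `m k` and each `m k`
is bounded, such blocks exist. A measure `m k` first charges some block `i`; from there on it is
dominated by `φ_i + φ_(i+1)` plus its tail past block `i + 1`, which is small. Hence the tails
`φ(A \ [0, N))` are controlled by the `φ_j(A)`, and conversely each `φ_j(A)` is at most such a tail.
-/

open Filter Topology Set Function
open scoped ENNReal

theorem ENNReal.tsum_subtype_le_of_inter_support_subset {α : Type*} (f : α → ℝ≥0∞)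
    {s t : Set α} (h : s ∩ support f ⊆ t) : ∑' x : s, f x ≤ ∑' x : t, f x := by
  rw [tsum_subtype, tsum_subtype]
  refine ENNReal.tsum_le_tsum fun x => ?_
  by_cases hx : x ∈ s ∩ support f
  · simp [indicator_of_mem hx.1, indicator_of_mem (h hx)]
  · rw [mem_inter_iff, not_and, mem_support, not_not] at hx
    by_cases hs : x ∈ s
    · simp [indicator_of_mem hs, hx hs]
    · simp [indicator_of_notMem hs]

theorem ENNReal.tendsto_tsum_Ici_atTop_zero (f : ℕ → ℝ≥0∞) (hf : ∑' x, f x ≠ ∞) :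
    Tendsto (fun N : ℕ => ∑' x : Ici N, f x) atTop (𝓝 0) := by
  convert (ENNReal.tendsto_tsum_compl_atTop_zero hf).comp tendsto_finset_range using 2 with N
  have hN : Ici N = {x | x ∉ Finset.range N} := by ext; simp
  rw [hN]
  rfl

theorem StrictMono.exists_ge_mem_Ico {n : ℕ → ℕ} (hn : StrictMono n) {j M : ℕ} (hM : n j ≤ M) :
    ∃ i, j ≤ i ∧ M ∈ Ico (n i) (n (i + 1)) := by
  have hshift : StrictMono fun p => n (j + p) := hn.comp (strictMono_id.const_add j)
  obtain ⟨p, hp, hp'⟩ := hshift.exists_between_of_tendsto_atTop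
    hshift.tendsto_atTop (x := M + 1) (by simpa [Nat.lt_succ_iff] using hM)
  exact ⟨j + p, by omega, by simpa [Nat.lt_succ_iff] using hp,
    by simpa [← add_assoc, Nat.succ_le_iff] using hp'⟩

section SupMass

variable {ι α : Type*}

noncomputable def supMass (w : ι → α → ℝ≥0∞) (A : Set α) : ℝ≥0∞ :=
  ⨆ k, ∑' x : A, w k x

theorem le_supMass (w : ι → α → ℝ≥0∞) (A : Set α) (k : ι) :
    ∑' x : A, w k x ≤ supMass w A :=
  le_iSup (fun k => ∑' x : A, w k x) k

@[simp]
theorem supMass_empty (w : ι → α → ℝ≥0∞) : supMass w ∅ = 0 := by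
  simp [supMass]

theorem supMass_mono (w : ι → α → ℝ≥0∞) {A B : Set α} (h : A ⊆ B) :
    supMass w A ≤ supMass w B :=
  iSup_mono fun k => ENNReal.tsum_mono_subtype (w k) h

theorem supMass_union_le (w : ι → α → ℝ≥0∞) (A B : Set α) :
    supMass w (A ∪ B) ≤ supMass w A + supMass w B :=
  iSup_le fun k => (ENNReal.tsum_union_le (w k) A B).trans
    (add_le_add (le_supMass w A k) (le_supMass w B k))

end SupMass

section Blocks

variable {ι : Type*} (w : ι → ℕ → ℝ≥0∞)

theorem exists_strictMono_tsum_Ici_le (hfin : ∀ x, {k | w k x ≠ 0}.Finite)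
    (hsum : ∀ k, ∑' x, w k x ≠ ∞) {ε : ℕ → ℝ≥0∞} (hε : ∀ j, 0 < ε j) :
    ∃ n : ℕ → ℕ, StrictMono n ∧
      ∀ j k x, x < n j → w k x ≠ 0 → ∑' y : Ici (n (j + 1)), w k y ≤ ε j := by
  have step : ∀ c j : ℕ, ∃ d : ℕ, c < d ∧ ∀ k x, x < c → w k x ≠ 0 → ∑' y : Ici d, w k y ≤ ε j := by
    intro c j
    have hK : {k | ∃ x < c, w k x ≠ 0}.Finite :=
      ((finite_Iio c).biUnion fun x _ => hfin x).subset fun k ⟨x, hx, hk⟩ => mem_biUnion hx hk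
    have hev : ∀ᶠ d : ℕ in atTop, ∀ k ∈ {k | ∃ x < c, w k x ≠ 0}, ∑' y : Ici d, w k y ≤ ε j :=
      hK.eventually_all.2 fun k _ =>
        ENNReal.tendsto_nhds_zero.1 (ENNReal.tendsto_tsum_Ici_atTop_zero _ (hsum k)) _ (hε j)
    obtain ⟨d, hcd, hd⟩ := ((eventually_gt_atTop c).and hev).exists
    exact ⟨d, hcd, fun k x hx hk => hd k ⟨x, hx, hk⟩⟩
  choose F hFc hF using step
  let n : ℕ → ℕ := fun j => Nat.rec 0 (fun j c => F c j) j
  exact ⟨n, strictMono_nat_of_lt_succ fun j => hFc (n j) j, fun j => hF (n j) j⟩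

variable {w} {n : ℕ → ℕ} {ε : ℕ → ℝ≥0∞}

theorem exists_ge_tsum_diff_Iio_le (hn : StrictMono n)
    (htail : ∀ j k x, x < n j → w k x ≠ 0 → ∑' y : Ici (n (j + 1)), w k y ≤ ε j)
    (A : Set ℕ) (k : ι) (j : ℕ) :
    ∃ i, j ≤ i ∧ ∑' x : ↥(A \ Iio (n j)), w k x ≤
      supMass w (A ∩ Ico (n i) (n (i + 1))) + supMass w (A ∩ Ico (n (i + 1)) (n (i + 2))) +
        ε (i + 1) := by
  classical
  by_cases hk : ∃ x, w k x ≠ 0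
  swap
  · push Not at hk
    exact ⟨j, le_rfl, by simp [hk]⟩
  -- `i` is the block of the first point charged by `w k`, or block `j` if that comes later.
  obtain ⟨i, hji, hi⟩ := hn.exists_ge_mem_Ico (le_max_left (n j) (Nat.find hk))
  refine ⟨i, hji, ?_⟩
  have hsub : (A \ Iio (n j)) ∩ support (w k) ⊆
      (A ∩ Ico (n i) (n (i + 1)) ∪ A ∩ Ico (n (i + 1)) (n (i + 2))) ∪ Ici (n (i + 2)) := by
    rintro x ⟨⟨hxA, hxj⟩, hx⟩
    have hfirst : Nat.find hk ≤ x := Nat.find_min' hk hx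
    have hmono : n (i + 1) ≤ n (i + 2) := hn.monotone (Nat.le_succ _)
    simp only [mem_Ico, mem_Iio, not_lt] at hi hxj
    simp only [mem_union, mem_inter_iff, mem_Ico, mem_Ici, hxA, true_and]
    omega
  calc ∑' x : ↥(A \ Iio (n j)), w k x
      ≤ ∑' x : ↥((A ∩ Ico (n i) (n (i + 1)) ∪ A ∩ Ico (n (i + 1)) (n (i + 2))) ∪
          Ici (n (i + 2))), w k x :=
        ENNReal.tsum_subtype_le_of_inter_support_subset _ hsub
    _ ≤ ∑' x : ↥(A ∩ Ico (n i) (n (i + 1))), w k x +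
          ∑' x : ↥(A ∩ Ico (n (i + 1)) (n (i + 2))), w k x + ∑' x : Ici (n (i + 2)), w k x :=
        (ENNReal.tsum_union_le _ _ _).trans (add_le_add (ENNReal.tsum_union_le _ _ _) le_rfl)
    _ ≤ _ :=
        add_le_add (add_le_add (le_supMass w _ k) (le_supMass w _ k))
          (htail (i + 1) k _ ((le_max_right _ _).trans_lt hi.2) (Nat.find_spec hk))

theorem tendsto_supMass_diff_Iio_iff (hn : StrictMono n)
    (htail : ∀ j k x, x < n j → w k x ≠ 0 → ∑' y : Ici (n (j + 1)), w k y ≤ ε j)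
    (hε : Tendsto ε atTop (𝓝 0)) (A : Set ℕ) :
    Tendsto (fun N => supMass w (A \ Iio N)) atTop (𝓝 0) ↔
      Tendsto (fun j => supMass w (A ∩ Ico (n j) (n (j + 1)))) atTop (𝓝 0) := by
  constructor
  · intro h
    refine tendsto_of_tendsto_of_tendsto_of_le_of_le tendsto_const_nhds h (fun _ => zero_le)
      fun j => supMass_mono w ?_
    rintro x ⟨hxA, hx, -⟩
    exact ⟨hxA, not_lt.2 ((hn.id_le j).trans hx)⟩
  · intro h
    have hg : Tendsto (fun i => supMass w (A ∩ Ico (n i) (n (i + 1))) +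
        supMass w (A ∩ Ico (n (i + 1)) (n (i + 2))) + ε (i + 1)) atTop (𝓝 0) := by
      simpa using (h.add (h.comp (tendsto_add_atTop_nat 1))).add
        (hε.comp (tendsto_add_atTop_nat 1))
    rw [ENNReal.tendsto_nhds_zero] at hg ⊢
    intro δ hδ
    obtain ⟨j, hj⟩ := eventually_atTop.1 (hg δ hδ)
    filter_upwards [eventually_ge_atTop (n j)] with N hN
    refine iSup_le fun k => ?_
    obtain ⟨i, hji, hi⟩ := exists_ge_tsum_diff_Iio_le hn htail A k j
    calc ∑' x : ↥(A \ Iio N), w k x ≤ ∑' x : ↥(A \ Iio (n j)), w k x :=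
          ENNReal.tsum_mono_subtype _ (sdiff_subset_sdiff_right (Iio_subset_Iio hN))
      _ ≤ δ := hi.trans (hj i hji)

end Blocks

theorem stmt10_general (m : ℕ → ℕ → ℝ)
    (hfinsupp : ∀ n : ℕ, {k : ℕ | m k n ≠ 0}.Finite)
    (hbdd : ∀ k : ℕ, Summable (m k)) :
    ∃ (φs : ℕ → Set ℕ → ENNReal) (S : ℕ → Finset ℕ),
      (∀ i j : ℕ, i ≠ j → Disjoint (S i) (S j)) ∧
      (∀ j : ℕ, φs j ∅ = 0) ∧
      (∀ j : ℕ, ∀ A B : Set ℕ, A ⊆ B → φs j A ≤ φs j B) ∧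
      (∀ j : ℕ, ∀ A B : Set ℕ, φs j (A ∪ B) ≤ φs j A + φs j B) ∧
      (∀ j : ℕ, ∀ A : Set ℕ, φs j A = φs j (A ∩ ↑(S j))) ∧
      ∀ A : Set ℕ,
        Tendsto
          (fun N : ℕ => ⨆ k : ℕ, ∑' n : ↥(A \ Set.Iio N), ENNReal.ofReal (m k ↑n))
          atTop (𝓝 0) ↔
        Tendsto (fun j : ℕ => φs j A) atTop (𝓝 0) := by
  set w : ℕ → ℕ → ℝ≥0∞ := fun k x => ENNReal.ofReal (m k x)
  have hfin : ∀ x, {k | w k x ≠ 0}.Finite :=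
    fun x => (hfinsupp x).subset fun k hk h => hk (by simp [w, h])
  have hsum : ∀ k, ∑' x, w k x ≠ ∞ :=
    fun k => ENNReal.tsum_coe_ne_top_iff_summable.2 (hbdd k).toNNReal
  obtain ⟨n, hn, htail⟩ := exists_strictMono_tsum_Ici_le w hfin hsum
    (ε := fun j => (j : ℝ≥0∞)⁻¹) fun j => ENNReal.inv_pos.2 (ENNReal.natCast_ne_top j)
  refine ⟨fun j A => supMass w (A ∩ Ico (n j) (n (j + 1))), fun j => Finset.Ico (n j) (n (j + 1)),
    ?_, fun j => by simp, fun j A B hAB => supMass_mono w (inter_subset_inter_left _ hAB),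
    fun j A B => by dsimp only; rw [union_inter_distrib_right]; exact supMass_union_le w _ _,
    fun j A => by simp [inter_assoc],
    tendsto_supMass_diff_Iio_iff hn htail ENNReal.tendsto_inv_nat_nhds_zero⟩
  intro i j hij
  rw [← Finset.disjoint_coe, Finset.coe_Ico, Finset.coe_Ico]
  exact hn.monotone.pairwise_disjoint_on_Ico_succ hij

/-- if `φ` is the supremum of countably many *bounded* measures such that
every point carries nonzero mass for only finitely many of them, then `Exh(φ)` is a
generalized density ideal. -/
theorem stmt10 (m : ℕ → ℕ → ℝ)
    (hm : ∀ k n : ℕ, 0 ≤ m k n)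
    (hfinsupp : ∀ n : ℕ, {k : ℕ | m k n ≠ 0}.Finite)
    (hbdd : ∀ k : ℕ, Summable (m k)) :
    ∃ (φs : ℕ → Set ℕ → ENNReal) (S : ℕ → Finset ℕ),
      (∀ i j : ℕ, i ≠ j → Disjoint (S i) (S j)) ∧
      (∀ j : ℕ, φs j ∅ = 0) ∧
      (∀ j : ℕ, ∀ A B : Set ℕ, A ⊆ B → φs j A ≤ φs j B) ∧
      (∀ j : ℕ, ∀ A B : Set ℕ, φs j (A ∪ B) ≤ φs j A + φs j B) ∧
      (∀ j : ℕ, ∀ A : Set ℕ, φs j A = φs j (A ∩ ↑(S j))) ∧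
      ∀ A : Set ℕ,
        Tendsto
          (fun N : ℕ => ⨆ k : ℕ, ∑' n : ↥(A \ Set.Iio N), ENNReal.ofReal (m k ↑n))
          atTop (𝓝 0) ↔
        Tendsto (fun j : ℕ => φs j A) atTop (𝓝 0) :=
  stmt10_general m hfinsupp hbdd
end

section
/- Farah's ideal J_F is not representable in c₀: there is no function h : ℕ → c₀ such that for every A ⊆ ℕ, A ∈ J_F if and only if ∑_{n∈A} h(n) converges unconditionally in c₀. -/
open Filter Topology
open scoped ZeroAtInfty

/-!
Suppose `h` represents `J_F`. For finite `G` let its mass be `∑ₙ min(n, |G ∩ [2ⁿ, 2ⁿ⁺¹)|) / n²`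
and `ν_k(G) = ∑_{i ∈ G} |h i k|`. In `c₀`, a series `∑_{n ∈ A} h n` converges unconditionally iff
`ν_k(G)` is small, uniformly in `k`, for all finite `G ⊆ A` far out. Gluing finite sets that live on
successive, disjoint ranges of dyadic blocks makes both directions of the representation uniform:
far-out sets of mass `≥ 1` have `ν_k > ε` for some `k`, and far-out sets of mass `≤ δ` have
`ν_k ≤ ε / 4` for all `k`.

These clash. Build a set of mass `≥ 1` out of about `2 / δ` pieces of mass between `δ / 2` and `δ`.
Each new piece has `ν_k ≤ ε / 4` for all `k`, while the part built so far has `ν_k ≤ ε / 4` beyond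
some `κ`. For the finitely many `k < κ`, the piece uses in each dyadic block `n` only the `n` points
of least weight `∑_{k < κ} |h i k|`; the whole block has mass `1 / n`, hence weight `≤ κ ε / 4`, so
these points have weight `O(n 2⁻ⁿ)`, which is summable. So all `ν_k` stay below `3 ε / 4`.
-/

open Finset

theorem Finset.exists_subset_card_eq_card_mul_sum_le {ι : Type*} [DecidableEq ι] (s : Finset ι)
    (w : ι → ℝ) {t : ℕ} (ht : t ≤ #s) :
    ∃ D ⊆ s, #D = t ∧ #s * ∑ i ∈ D, w i ≤ t * ∑ i ∈ s, w i := by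
  induction s using Finset.induction_on_max_value w generalizing t with
  | empty => exact ⟨∅, subset_rfl, by simp_all, by simp⟩
  | insert a s ha hmax ih =>
    rw [card_insert_of_notMem ha] at ht ⊢
    rcases ht.eq_or_lt with rfl | ht
    · exact ⟨insert a s, subset_rfl, card_insert_of_notMem ha, le_rfl⟩
    obtain ⟨D, hDs, rfl, hD⟩ := ih (Nat.le_of_lt_succ ht)
    have hDa : ∑ i ∈ D, w i ≤ #D * w a := by
      simpa using sum_le_card_nsmul D w (w a) fun i hi => hmax i (hDs hi)
    refine ⟨D, hDs.trans (subset_insert a s), rfl, ?_⟩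
    rw [sum_insert ha]
    push_cast
    linarith

theorem exists_sum_Ico_mem_Icc_of_not_summable {a : ℕ → ℝ} (ha : ∀ n, 0 ≤ a n) (hdiv : ¬ Summable a)
    {P : ℕ} {c η : ℝ} (hc : 0 < c) (hη : ∀ n, P ≤ n → a n ≤ η) :
    ∃ Q, ∑ n ∈ Ico P Q, a n ∈ Set.Icc c (c + η) := by
  classical
  have hex : ∃ Q, c ≤ ∑ n ∈ Ico P Q, a n := by
    rw [not_summable_iff_tendsto_nat_atTop_of_nonneg ha] at hdiv
    obtain ⟨Q, hQ, hPQ⟩ :=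
      ((hdiv.eventually_ge_atTop (∑ n ∈ range P, a n + c)).and (eventually_ge_atTop P)).exists
    exact ⟨Q, by rw [sum_Ico_eq_sub _ hPQ]; linarith⟩
  refine ⟨Nat.find hex, Nat.find_spec hex, ?_⟩
  have hP : P < Nat.find hex := by
    by_contra! h
    have := Nat.find_spec hex
    rw [Ico_eq_empty_of_le h, sum_empty] at this
    linarith
  obtain ⟨Q, hQ⟩ : ∃ Q, Nat.find hex = Q + 1 := Nat.exists_eq_add_one.2 (by omega)
  have hlt : ∑ n ∈ Ico P Q, a n < c := by
    simpa using Nat.find_min hex (show Q < Nat.find hex by omega)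
  rw [hQ, sum_Ico_succ_top (by omega)]
  linarith [hη Q (by omega)]

theorem Summable.eventually_sum_Ico_le {f : ℕ → ℝ} (hf : Summable f) {η : ℝ} (hη : 0 < η) :
    ∀ᶠ P in atTop, ∀ Q, ∑ n ∈ Ico P Q, f n ≤ η := by
  obtain ⟨s, hs⟩ := summable_iff_vanishing.1 hf (Set.Iio η) (Iio_mem_nhds hη)
  filter_upwards [eventually_gt_atTop (s.sup id)] with P hP Q
  refine (hs _ (disjoint_left.2 fun n hn hns => ?_)).le
  have := le_sup (f := id) hns
  simp only [mem_Ico] at hn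
  simp only [id] at this
  omega

theorem summable_iff_summable_sum_Ico {f : ℕ → ℝ} (hf : ∀ n, 0 ≤ f n) {b : ℕ → ℕ}
    (hb : StrictMono b) (hb0 : b 0 = 0) :
    Summable f ↔ Summable fun j => ∑ n ∈ Ico (b j) (b (j + 1)), f n := by
  have hpartial : ∀ J,
      ∑ j ∈ range J, ∑ n ∈ Ico (b j) (b (j + 1)), f n = ∑ n ∈ range (b J), f n := by
    intro J
    induction J with
    | zero => simp [hb0]
    | succ J ih =>
      rw [sum_range_succ, ih, range_eq_Ico, range_eq_Ico,
        sum_Ico_consecutive _ (Nat.zero_le _) (hb.monotone J.le_succ)]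
  have hmono : Monotone fun N => ∑ n ∈ range N, f n :=
    fun M N hMN => sum_le_sum_of_subset_of_nonneg (range_subset_range.2 hMN) fun n _ _ => hf n
  rw [summable_iff_not_tendsto_nat_atTop_of_nonneg hf,
    summable_iff_not_tendsto_nat_atTop_of_nonneg fun j => sum_nonneg fun n _ => hf n,
    funext hpartial]
  refine not_congr ⟨fun h => h.comp hb.tendsto_atTop, fun h => ?_⟩
  refine (tendsto_atTop_atTop_iff_of_monotone hmono).2 fun c => ?_
  obtain ⟨J, hJ⟩ := tendsto_atTop_atTop.1 h c
  exact ⟨b J, hJ J le_rfl⟩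

namespace ZeroAtInftyContinuousMap

variable {X ι : Type*} [TopologicalSpace X]

theorem sum_apply {β : Type*} [TopologicalSpace β] [AddCommMonoid β] [ContinuousAdd β]
    (t : Finset ι) (f : ι → C₀(X, β)) (x : X) : (∑ i ∈ t, f i) x = ∑ i ∈ t, f i x :=
  map_sum (⟨⟨fun g : C₀(X, β) => g x, rfl⟩, fun _ _ => rfl⟩ : C₀(X, β) →+ β) f t

theorem abs_apply_le_norm (f : C₀(X, ℝ)) (x : X) : |f x| ≤ ‖f‖ := by
  rw [← norm_toBCF_eq_norm]
  exact f.toBCF.norm_coe_le_norm x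

theorem norm_le_of_forall_abs_le {f : C₀(X, ℝ)} {C : ℝ} (hC : 0 ≤ C) (hf : ∀ x, |f x| ≤ C) :
    ‖f‖ ≤ C := by
  rw [← norm_toBCF_eq_norm]
  exact (BoundedContinuousFunction.norm_le hC).2 hf

theorem sum_abs_apply_le_two_mul (t : Finset ι) (f : ι → C₀(X, ℝ)) (x : X) {C : ℝ}
    (hC : ∀ u ⊆ t, ‖∑ i ∈ u, f i‖ ≤ C) : ∑ i ∈ t, |f i x| ≤ 2 * C := by
  classical
  have hfilter : ∀ (p : ι → Prop) [DecidablePred p], |∑ i ∈ t with p i, f i x| ≤ C :=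
    fun p _ => by simpa [sum_apply] using (abs_apply_le_norm _ x).trans (hC _ (filter_subset p t))
  have hpos : ∑ i ∈ t with (0 : ℝ) ≤ f i x, |f i x| ≤ C := by
    rw [sum_congr rfl fun i hi => abs_of_nonneg (mem_filter.1 hi).2]
    exact (le_abs_self _).trans (hfilter _)
  have hneg : ∑ i ∈ t with ¬ (0 : ℝ) ≤ f i x, |f i x| ≤ C := by
    rw [sum_congr rfl fun i hi => abs_of_neg (not_le.1 (mem_filter.1 hi).2), sum_neg_distrib]
    exact (neg_le_abs _).trans (hfilter _)
  rw [← sum_filter_add_sum_filter_not t (fun i => (0 : ℝ) ≤ f i x) (fun i => |f i x|)]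
  linarith

theorem tendsto_sum_abs_cocompact (t : Finset ι) (f : ι → C₀(X, ℝ)) :
    Tendsto (fun x => ∑ i ∈ t, |f i x|) (cocompact X) (𝓝 0) := by
  simpa using tendsto_finsetSum t fun i _ => (zero_at_infty (f i)).abs

theorem summable_iff_forall_sum_abs_le {f : ι → C₀(X, ℝ)} :
    Summable f ↔ ∀ ε > 0, ∃ s : Finset ι, ∀ t, Disjoint t s → ∀ x, ∑ i ∈ t, |f i x| ≤ ε := by
  rw [summable_iff_vanishing_norm]
  constructor
  · intro h ε hε
    obtain ⟨s, hs⟩ := h (ε / 2) (by positivity)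
    refine ⟨s, fun t ht x => ?_⟩
    have := sum_abs_apply_le_two_mul t f x fun u hu => (hs u (ht.mono_left hu)).le
    linarith
  · intro h ε hε
    obtain ⟨s, hs⟩ := h (ε / 2) (by positivity)
    refine ⟨s, fun t ht => ?_⟩
    refine (norm_le_of_forall_abs_le (by positivity) fun x => ?_).trans_lt (half_lt_self hε)
    simpa [sum_apply] using (abs_sum_le_sum_abs _ _).trans (hs t ht x)

end ZeroAtInftyContinuousMap

theorem summable_restrict_iff_forall_sum_abs_le {X : Type*} [TopologicalSpace X]
    (h : ℕ → C₀(X, ℝ)) (A : Set ℕ) :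
    Summable (fun n : A => h n) ↔ ∀ ε > 0, ∃ m, ∀ G : Finset ℕ, ↑G ⊆ A → (∀ i ∈ G, m ≤ i) →
      ∀ x, ∑ i ∈ G, |h i x| ≤ ε := by
  classical
  rw [ZeroAtInftyContinuousMap.summable_iff_forall_sum_abs_le]
  refine forall₂_congr fun ε _ => ⟨fun ⟨s, hs⟩ => ?_, fun ⟨m, hm⟩ => ?_⟩
  · refine ⟨s.sup Subtype.val + 1, fun G hGA hGm x => ?_⟩
    rw [← sum_subtype_of_mem (fun i => |h i x|) fun i hi => hGA hi]
    refine hs _ (disjoint_left.2 fun i hiG his => ?_) x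
    have := le_sup (f := Subtype.val) his
    have := hGm i (mem_subtype.1 hiG)
    omega
  · refine ⟨(range m).subtype (· ∈ A), fun t ht x => ?_⟩
    have hGm : ∀ i ∈ t.map (Function.Embedding.subtype _), m ≤ i := by
      simp only [Finset.mem_map, Function.Embedding.coe_subtype]
      rintro _ ⟨i, hi, rfl⟩
      by_contra! hlt
      exact disjoint_left.1 ht hi (by simpa using hlt)
    simpa using hm _ (by simp) hGm x

def dyadicBlock (n : ℕ) : Finset ℕ := Ico (2 ^ n) (2 ^ (n + 1))

theorem mem_dyadicBlock {i n : ℕ} : i ∈ dyadicBlock n ↔ 2 ^ n ≤ i ∧ i < 2 ^ (n + 1) := mem_Ico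

theorem card_dyadicBlock (n : ℕ) : #(dyadicBlock n) = 2 ^ n := by
  rw [dyadicBlock, Nat.card_Ico, pow_succ]
  omega

theorem eq_of_mem_dyadicBlock {i m n : ℕ} (hm : i ∈ dyadicBlock m) (hn : i ∈ dyadicBlock n) :
    m = n := by
  rw [mem_dyadicBlock] at hm hn
  have h1 := (Nat.pow_lt_pow_iff_right one_lt_two).1 (hm.1.trans_lt hn.2)
  have h2 := (Nat.pow_lt_pow_iff_right one_lt_two).1 (hn.1.trans_lt hm.2)
  omega

theorem disjoint_dyadicBlock_of_forall_lt {G : Finset ℕ} {n : ℕ} (h : ∀ i ∈ G, i < 2 ^ n) :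
    Disjoint G (dyadicBlock n) :=
  disjoint_left.2 fun i hi hin => (h i hi).not_ge (mem_dyadicBlock.1 hin).1

theorem disjoint_dyadicBlock_of_forall_le {G : Finset ℕ} {n : ℕ} (h : ∀ i ∈ G, 2 ^ (n + 1) ≤ i) :
    Disjoint G (dyadicBlock n) :=
  disjoint_left.2 fun i hi hin => (h i hi).not_gt (mem_dyadicBlock.1 hin).2

noncomputable def farahTerm (A : Set ℕ) (n : ℕ) : ℝ :=
  ((min n ((A ∩ Set.Ico (2 ^ n) (2 ^ (n + 1))).ncard) : ℕ) : ℝ) / (n : ℝ) ^ 2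

noncomputable def farahMass (G : Finset ℕ) : ℝ := ∑' n, farahTerm G n

theorem farahTerm_nonneg (A : Set ℕ) (n : ℕ) : 0 ≤ farahTerm A n := by
  unfold farahTerm
  positivity

theorem farahTerm_coe (G : Finset ℕ) (n : ℕ) :
    farahTerm G n = ((min n #(G ∩ dyadicBlock n) : ℕ) : ℝ) / (n : ℝ) ^ 2 := by
  rw [farahTerm, dyadicBlock, ← coe_Ico, ← coe_inter, Set.ncard_coe_finset]

theorem farahTerm_eq_zero {G : Finset ℕ} {n : ℕ} (h : Disjoint G (dyadicBlock n)) :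
    farahTerm G n = 0 := by
  rw [farahTerm_coe, disjoint_iff_inter_eq_empty.1 h]
  simp

theorem farahMass_eq_sum {G s : Finset ℕ} (h : ∀ n ∉ s, Disjoint G (dyadicBlock n)) :
    farahMass G = ∑ n ∈ s, farahTerm G n :=
  tsum_eq_sum fun n hn => farahTerm_eq_zero (h n hn)

theorem summable_farahTerm (G : Finset ℕ) : Summable (farahTerm G) :=
  summable_of_ne_finset_zero (s := range (G.sup id + 1)) fun n hn =>
    farahTerm_eq_zero <| disjoint_dyadicBlock_of_forall_lt fun i hi => by
      have := le_sup (f := id) hi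
      have : n < 2 ^ n := Nat.lt_two_pow_self
      simp only [mem_range, id] at *
      omega

theorem farahMass_empty : farahMass ∅ = 0 := by
  simp [farahMass_eq_sum (s := ∅)]

theorem farahMass_union {G H : Finset ℕ} {B : ℕ} (hG : ∀ i ∈ G, i < 2 ^ B)
    (hH : ∀ i ∈ H, 2 ^ B ≤ i) : farahMass (G ∪ H) = farahMass G + farahMass H := by
  rw [farahMass, farahMass, farahMass, ← (summable_farahTerm G).tsum_add (summable_farahTerm H)]
  congr 1
  funext n
  simp only [farahTerm_coe, union_inter_distrib_right]
  rcases lt_or_ge n B with hn | hn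
  · have : Disjoint H (dyadicBlock n) := disjoint_dyadicBlock_of_forall_le fun i hi =>
      ((Nat.pow_le_pow_iff_right one_lt_two).2 hn).trans (hH i hi)
    simp [disjoint_iff_inter_eq_empty.1 this]
  · have : Disjoint G (dyadicBlock n) := disjoint_dyadicBlock_of_forall_lt fun i hi =>
      (hG i hi).trans_le ((Nat.pow_le_pow_iff_right one_lt_two).2 hn)
    simp [disjoint_iff_inter_eq_empty.1 this]

theorem farahMass_biUnion {s : Finset ℕ} {D : ℕ → Finset ℕ}
    (hD : ∀ n ∈ s, D n ⊆ dyadicBlock n ∧ n ≤ #(D n)) :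
    farahMass (s.biUnion D) = ∑ n ∈ s, 1 / (n : ℝ) := by
  have hinter : ∀ n, s.biUnion D ∩ dyadicBlock n = if n ∈ s then D n else ∅ := by
    intro n
    ext i
    simp only [mem_inter, mem_biUnion]
    constructor
    · rintro ⟨⟨n', hn', hi⟩, hin⟩
      obtain rfl := eq_of_mem_dyadicBlock ((hD n' hn').1 hi) hin
      simpa [hn'] using hi
    · split_ifs with hn
      · exact fun hi => ⟨⟨n, hn, hi⟩, (hD n hn).1 hi⟩
      · simp
  rw [farahMass_eq_sum (s := s) fun n hn => by simp [disjoint_iff_inter_eq_empty, hinter, hn]]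
  refine sum_congr rfl fun n hn => ?_
  rw [farahTerm_coe, hinter, if_pos hn, min_eq_left (hD n hn).2, sq, div_self_mul_self', one_div]

theorem farahMass_dyadicBlock (n : ℕ) : farahMass (dyadicBlock n) = 1 / n := by
  rw [← singleton_biUnion (a := n) (t := dyadicBlock), farahMass_biUnion, sum_singleton]
  simpa [card_dyadicBlock] using Nat.lt_two_pow_self.le

theorem exists_seq_mem_Ico_two_pow (p : ℕ → Finset ℕ → Prop)
    (hp : ∀ j m, ∃ G : Finset ℕ, (∀ i ∈ G, m ≤ i) ∧ p j G) :
    ∃ (g : ℕ → Finset ℕ) (b : ℕ → ℕ), StrictMono b ∧ b 0 = 0 ∧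
      (∀ j, ∀ i ∈ g j, 2 ^ b j ≤ i ∧ i < 2 ^ b (j + 1)) ∧ ∀ j, p j (g j) := by
  choose F hFfar hFp using hp
  let b : ℕ → ℕ := fun j => Nat.rec 0 (fun j bj => bj + (F j (2 ^ bj)).sup id + 1) j
  have hb : ∀ j, b (j + 1) = b j + (F j (2 ^ b j)).sup id + 1 := fun j => rfl
  refine ⟨fun j => F j (2 ^ b j), b, strictMono_nat_of_lt_succ fun j => by rw [hb]; omega, rfl,
    fun j i hi => ⟨hFfar _ _ i hi, ?_⟩, fun j => hFp _ _⟩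
  have h1 : i ≤ (F j (2 ^ b j)).sup id := le_sup (f := id) hi
  have h2 : 2 ^ ((F j (2 ^ b j)).sup id + 1) ≤ 2 ^ b (j + 1) :=
    (Nat.pow_le_pow_iff_right one_lt_two).2 (by rw [hb]; omega)
  have h3 : (F j (2 ^ b j)).sup id + 1 < 2 ^ ((F j (2 ^ b j)).sup id + 1) := Nat.lt_two_pow_self
  omega

theorem exists_subset_dyadicBlock_sum_le (w : ℕ → ℝ) (n : ℕ) :
    ∃ D ⊆ dyadicBlock n, #D = n ∧ ∑ i ∈ D, w i ≤ n * (1 / 2) ^ n * ∑ i ∈ dyadicBlock n, w i := by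
  obtain ⟨D, hD, hcard, hsum⟩ := (dyadicBlock n).exists_subset_card_eq_card_mul_sum_le w
    (t := n) (by rw [card_dyadicBlock]; exact Nat.lt_two_pow_self.le)
  refine ⟨D, hD, hcard, ?_⟩
  rw [card_dyadicBlock] at hsum
  push_cast at hsum
  rw [one_div_pow, mul_one_div, div_mul_eq_mul_div, le_div_iff₀ (by positivity)]
  linarith

section BlockSequence

variable {g : ℕ → Finset ℕ} {b : ℕ → ℕ} (hb : StrictMono b)
  (hg : ∀ j, ∀ i ∈ g j, 2 ^ b j ≤ i ∧ i < 2 ^ b (j + 1))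
include hb hg

theorem le_of_mem_block {i j : ℕ} (hi : i ∈ g j) : j ≤ i :=
  (hb.id_le j).trans (Nat.lt_two_pow_self.le.trans (hg j i hi).1)

theorem lt_succ_of_mem_block {i j j' : ℕ} (hi : i ∈ g j) (hj' : 2 ^ b j' ≤ i) : j' < j + 1 :=
  hb.lt_iff_lt.1 ((Nat.pow_lt_pow_iff_right one_lt_two).1 (hj'.trans_lt (hg j i hi).2))

theorem eq_of_mem_block {i j j' : ℕ} (hi : i ∈ g j) (hj' : 2 ^ b j' ≤ i)
    (hj'' : i < 2 ^ b (j' + 1)) : j = j' := by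
  have := lt_succ_of_mem_block hb hg hi hj'
  have := hb.lt_iff_lt.1 ((Nat.pow_lt_pow_iff_right one_lt_two).1 ((hg j i hi).1.trans_lt hj''))
  omega

theorem sum_Ico_farahTerm_iUnion (j : ℕ) :
    ∑ n ∈ Ico (b j) (b (j + 1)), farahTerm (⋃ j, (g j : Set ℕ)) n = farahMass (g j) := by
  have hpow := fun {m n : ℕ} => Nat.pow_le_pow_iff_right (m := m) (n := n) one_lt_two
  rw [farahMass_eq_sum fun n hn => ?_]
  · refine sum_congr rfl fun n hn => ?_
    rw [mem_Ico] at hn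
    suffices (⋃ j, (g j : Set ℕ)) ∩ Set.Ico (2 ^ n) (2 ^ (n + 1)) =
        (g j : Set ℕ) ∩ Set.Ico (2 ^ n) (2 ^ (n + 1)) by
      simp only [farahTerm, this]
    ext i
    simp only [Set.mem_inter_iff, Set.mem_iUnion, Set.mem_Ico, mem_coe]
    refine ⟨fun ⟨⟨j', hi⟩, hin⟩ => ⟨?_, hin⟩, fun ⟨hi, hin⟩ => ⟨⟨j, hi⟩, hin⟩⟩
    obtain rfl := eq_of_mem_block hb hg hi ((hpow.2 hn.1).trans hin.1)
      (hin.2.trans_le (hpow.2 hn.2))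
    exact hi
  · rw [mem_Ico, not_and_or, not_le, not_lt] at hn
    rcases hn with hn | hn
    · exact disjoint_dyadicBlock_of_forall_le fun i hi => (hpow.2 hn).trans (hg j i hi).1
    · exact disjoint_dyadicBlock_of_forall_lt fun i hi => (hg j i hi).2.trans_le (hpow.2 hn)

theorem summable_farahTerm_iUnion_iff (hb0 : b 0 = 0) :
    Summable (farahTerm (⋃ j, (g j : Set ℕ))) ↔ Summable fun j => farahMass (g j) := by
  rw [summable_iff_summable_sum_Ico (farahTerm_nonneg _) hb hb0]
  simp only [sum_Ico_farahTerm_iUnion hb hg]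

theorem exists_sum_le_sum_Ico_of_subset_iUnion {w : ℕ → ℝ} (hw : ∀ i, 0 ≤ w i) {G : Finset ℕ}
    (hGg : ↑G ⊆ ⋃ j, (g j : Set ℕ)) {j₀ : ℕ} (hG : ∀ i ∈ G, 2 ^ b j₀ ≤ i) :
    ∃ J, ∑ i ∈ G, w i ≤ ∑ j ∈ Ico j₀ J, ∑ i ∈ g j, w i := by
  classical
  refine ⟨G.sup id + 1, ?_⟩
  have hsub : G ⊆ (Ico j₀ (G.sup id + 1)).biUnion g := fun i hi => by
    obtain ⟨j, hij⟩ := Set.mem_iUnion.1 (hGg hi)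
    have := lt_succ_of_mem_block hb hg hij (hG i hi)
    have := le_of_mem_block hb hg hij
    have := le_sup (f := id) hi
    exact mem_biUnion.2 ⟨j, mem_Ico.2 ⟨by omega, by simp only [id] at *; omega⟩, hij⟩
  refine (sum_le_sum_of_subset_of_nonneg hsub fun i _ _ => hw i).trans_eq (sum_biUnion ?_)
  intro j _ j' _ hjj'
  exact disjoint_left.2 fun i hi hi' =>
    hjj' (eq_of_mem_block hb hg hi (hg j' i hi').1 (hg j' i hi').2)

end BlockSequence

section Representation

variable (h : ℕ → C₀(ℕ, ℝ))

theorem exists_forall_sum_abs_le_of_farahMass_le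
    (hrep : ∀ A : Set ℕ, Summable (farahTerm A) → Summable fun n : A => h n) {ε : ℝ} (hε : 0 < ε) :
    ∃ δ > 0, ∃ m, ∀ G : Finset ℕ, (∀ i ∈ G, m ≤ i) → farahMass G ≤ δ →
      ∀ k, ∑ i ∈ G, |h i k| ≤ ε := by
  by_contra! hcon
  obtain ⟨g, b, hb, hb0, hg, hgp⟩ := exists_seq_mem_Ico_two_pow
    (fun j G => farahMass G ≤ (1 / 2) ^ j ∧ ∃ k, ε < ∑ i ∈ G, |h i k|)
    fun j m => by simpa using hcon ((1 / 2) ^ j) (by positivity) m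
  have hsum : Summable (farahTerm (⋃ j, (g j : Set ℕ))) :=
    (summable_farahTerm_iUnion_iff hb hg hb0).2 <|
      (summable_geometric_two).of_nonneg_of_le (fun j => tsum_nonneg (farahTerm_nonneg _))
        fun j => by simpa using (hgp j).1
  obtain ⟨m, hm⟩ := (summable_restrict_iff_forall_sum_abs_le h _).1 (hrep _ hsum) ε hε
  obtain ⟨k, hk⟩ := (hgp m).2
  exact hk.not_ge <| hm (g m) (Set.subset_iUnion (fun j => (g j : Set ℕ)) m)
    (fun i hi => le_of_mem_block hb hg hi) k

theorem exists_lt_sum_abs_of_one_le_farahMass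
    (hrep : ∀ A : Set ℕ, (Summable fun n : A => h n) → Summable (farahTerm A)) :
    ∃ ε > 0, ∃ m, ∀ G : Finset ℕ, (∀ i ∈ G, m ≤ i) → 1 ≤ farahMass G →
      ∃ k, ε < ∑ i ∈ G, |h i k| := by
  by_contra! hcon
  obtain ⟨g, b, hb, hb0, hg, hgp⟩ := exists_seq_mem_Ico_two_pow
    (fun j G => 1 ≤ farahMass G ∧ ∀ k, ∑ i ∈ G, |h i k| ≤ (1 / 2) ^ j)
    fun j m => by simpa using hcon ((1 / 2) ^ j) (by positivity) m
  have hsum : Summable fun n : ⋃ j, (g j : Set ℕ) => h n := by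
    refine (summable_restrict_iff_forall_sum_abs_le h _).2 fun ε hε => ?_
    obtain ⟨j₀, hj₀⟩ := exists_pow_lt_of_lt_one (half_pos hε) one_half_lt_one
    refine ⟨2 ^ b j₀, fun G hGg hG k => ?_⟩
    obtain ⟨J, hJ⟩ :=
      exists_sum_le_sum_Ico_of_subset_iUnion hb hg (fun i => abs_nonneg (h i k)) hGg hG
    calc ∑ i ∈ G, |h i k| ≤ ∑ j ∈ Ico j₀ J, (1 / 2 : ℝ) ^ j :=
          hJ.trans (sum_le_sum fun j _ => (hgp j).2 k)
      _ ≤ (1 / 2) ^ j₀ / (1 - 1 / 2) := geom_sum_Ico_le_of_lt_one (by norm_num) (by norm_num)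
      _ ≤ ε := by norm_num; linarith
  have := ((summable_farahTerm_iUnion_iff hb hg hb0).1 (hrep _ hsum)).tendsto_atTop_zero
  obtain ⟨j, hj⟩ := (this.eventually (gt_mem_nhds one_pos)).exists
  exact hj.not_ge (hgp j).1

theorem exists_cheap_piece {m : ℕ} {δ ε : ℝ} (hδ : 0 < δ)
    (hU : ∀ G : Finset ℕ, (∀ i ∈ G, m ≤ i) → farahMass G ≤ δ → ∀ k, ∑ i ∈ G, |h i k| ≤ ε)
    (B κ : ℕ) {σ : ℝ} (hσ : 0 < σ) :
    ∃ H : Finset ℕ, (∀ i ∈ H, 2 ^ B ≤ i) ∧ δ / 2 ≤ farahMass H ∧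
      (∀ k, ∑ i ∈ H, |h i k| ≤ ε) ∧ ∀ k < κ, ∑ i ∈ H, |h i k| ≤ σ := by
  set w : ℕ → ℝ := fun i => ∑ k ∈ range κ, |h i k|
  have hgeom : Summable fun n : ℕ => n * (1 / 2 : ℝ) ^ n * (κ * ε) := by
    simpa using (summable_pow_mul_geometric_of_norm_lt_one 1
      (by norm_num : ‖(1 / 2 : ℝ)‖ < 1)).mul_right (κ * ε)
  obtain ⟨P, ⟨⟨⟨hPB, hPm⟩, hP1⟩, hPδ⟩, hPσ⟩ := ((((eventually_ge_atTop B).and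
    (eventually_ge_atTop m)).and (eventually_ge_atTop 1)).and
    (tendsto_one_div_atTop_nhds_zero_nat.eventually (ge_mem_nhds (half_pos hδ)))).and
    (hgeom.eventually_sum_Ico_le hσ) |>.exists
  have hpow : ∀ {a b : ℕ}, a ≤ b → 2 ^ a ≤ 2 ^ b := (Nat.pow_le_pow_iff_right one_lt_two).2
  have hPpow : P < 2 ^ P := Nat.lt_two_pow_self
  have hinv : ∀ n, P ≤ n → 1 / (n : ℝ) ≤ δ / 2 := fun n hn =>
    (one_div_le_one_div_of_le (Nat.cast_pos.2 hP1) (by exact_mod_cast hn)).trans hPδ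
  have hweight : ∀ n, P ≤ n → ∑ i ∈ dyadicBlock n, w i ≤ κ * ε := by
    intro n hn
    have hfar : ∀ i ∈ dyadicBlock n, m ≤ i := fun i hi => by
      have := (hpow hn).trans (mem_dyadicBlock.1 hi).1
      omega
    have hmass : farahMass (dyadicBlock n) ≤ δ := by
      rw [farahMass_dyadicBlock]
      linarith [hinv n hn]
    rw [sum_comm]
    simpa using sum_le_sum fun k (_ : k ∈ range κ) => hU _ hfar hmass k
  choose D hDsub hDcard hDw using exists_subset_dyadicBlock_sum_le w
  obtain ⟨Q, hQδ, hδQ⟩ := exists_sum_Ico_mem_Icc_of_not_summable (fun n => by positivity)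
    Real.not_summable_one_div_natCast (half_pos hδ) hinv
  have hmass : farahMass ((Ico P Q).biUnion D) = ∑ n ∈ Ico P Q, 1 / (n : ℝ) :=
    farahMass_biUnion fun n _ => ⟨hDsub n, (hDcard n).ge⟩
  have hfar : ∀ i ∈ (Ico P Q).biUnion D, 2 ^ P ≤ i := by
    simp only [mem_biUnion, mem_Ico]
    rintro i ⟨n, hn, hi⟩
    exact (hpow hn.1).trans (mem_dyadicBlock.1 (hDsub n hi)).1
  refine ⟨(Ico P Q).biUnion D, fun i hi => (hpow hPB).trans (hfar i hi), hmass ▸ hQδ,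
    hU _ (fun i hi => by have := hfar i hi; omega) (by linarith), fun k hk => ?_⟩
  have hdisj : (Ico P Q : Set ℕ).PairwiseDisjoint D := fun n _ n' _ hnn' =>
    disjoint_left.2 fun i hi hi' => hnn' (eq_of_mem_dyadicBlock (hDsub n hi) (hDsub n' hi'))
  calc ∑ i ∈ (Ico P Q).biUnion D, |h i k| ≤ ∑ i ∈ (Ico P Q).biUnion D, w i :=
        sum_le_sum fun i _ => single_le_sum (f := fun k => |h i k|) (fun _ _ => abs_nonneg _)
          (mem_range.2 hk)
    _ = ∑ n ∈ Ico P Q, ∑ i ∈ D n, w i := sum_biUnion hdisj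
    _ ≤ ∑ n ∈ Ico P Q, n * (1 / 2 : ℝ) ^ n * (κ * ε) := sum_le_sum fun n hn =>
        (hDw n).trans (mul_le_mul_of_nonneg_left (hweight n (mem_Ico.1 hn).1) (by positivity))
    _ ≤ σ := hPσ Q

theorem exists_farahMass_ge {m : ℕ} {δ ε : ℝ} (hδ : 0 < δ) (hε : 0 < ε)
    (hU : ∀ G : Finset ℕ, (∀ i ∈ G, m ≤ i) → farahMass G ≤ δ → ∀ k, ∑ i ∈ G, |h i k| ≤ ε)
    (m' r : ℕ) : ∀ σ > 0, ∃ G : Finset ℕ, (∀ i ∈ G, m' ≤ i) ∧ r * (δ / 2) ≤ farahMass G ∧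
      ∀ k, ∑ i ∈ G, |h i k| ≤ 2 * ε + σ := by
  induction r with
  | zero =>
    intro σ hσ
    exact ⟨∅, by simp, by simp [farahMass_empty], fun k => by simp; positivity⟩
  | succ r ih =>
    intro σ hσ
    obtain ⟨G, hGfar, hGmass, hGvar⟩ := ih (σ / 2) (half_pos hσ)
    obtain ⟨κ, hκ⟩ := eventually_atTop.1 <| (cocompact_eq_atTop (α := ℕ) ▸
      ZeroAtInftyContinuousMap.tendsto_sum_abs_cocompact G h).eventually (ge_mem_nhds hε)
    set B := G.sup id + 1 + m'
    obtain ⟨H, hHfar, hHmass, hHvar, hHκ⟩ := exists_cheap_piece h hδ hU B κ (half_pos hσ)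
    have hGB : ∀ i ∈ G, i < 2 ^ B := fun i hi =>
      ((le_sup (f := id) hi).trans_lt (by omega)).trans Nat.lt_two_pow_self
    have hBm' : m' < 2 ^ B := (show m' < B by omega).trans Nat.lt_two_pow_self
    refine ⟨G ∪ H, fun i hi => ?_, ?_, fun k => ?_⟩
    · rcases mem_union.1 hi with hi | hi
      exacts [hGfar i hi, hBm'.le.trans (hHfar i hi)]
    · rw [farahMass_union hGB hHfar]
      push_cast
      linarith
    · rw [sum_union (disjoint_left.2 fun i hG hH => (hGB i hG).not_ge (hHfar i hH))]
      rcases lt_or_ge k κ with hk | hk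
      · linarith [hGvar k, hHκ k hk]
      · linarith [hκ k hk, hHvar k]

end Representation

/-- Farah's ideal
`J_F = {A : ∑_{n≥1} min(n, |A ∩ [2ⁿ, 2ⁿ⁺¹)|)/n² < ∞}` is not representable in `c₀`.
(The `n = 0` term of the series below is `0/0 = 0`, so the sum is over `n ≥ 1`.) -/
theorem stmt14 :
    ¬ ∃ h : ℕ → C₀(ℕ, ℝ),
      ∀ A : Set ℕ,
        (Summable fun n : ℕ =>
          ((min n ((A ∩ Set.Ico (2 ^ n) (2 ^ (n + 1))).ncard) : ℕ) : ℝ) / (n : ℝ) ^ 2) ↔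
        Summable (fun n : A => h n) := by
  rintro ⟨h, rep⟩
  obtain ⟨ε, hε, m₀, hW⟩ := exists_lt_sum_abs_of_one_le_farahMass h fun A => (rep A).2
  obtain ⟨δ, hδ, m₁, hU⟩ :=
    exists_forall_sum_abs_le_of_farahMass_le h (fun A => (rep A).1) (by positivity : 0 < ε / 4)
  obtain ⟨r, hr⟩ := exists_nat_ge (2 / δ)
  obtain ⟨G, hGfar, hGmass, hGvar⟩ :=
    exists_farahMass_ge h hδ (by positivity) hU m₀ r (ε / 4) (by positivity)
  obtain ⟨k, hk⟩ := hW G hGfar <| by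
    rw [div_le_iff₀ hδ] at hr
    linarith
  linarith [hGvar k]
end
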